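/- arXiv:1609.06687 — 2 statements merged into one kernel-verified Lean document; each statement's English description precedes it below -/
import Mathlib

section
/- Let d be a fundamental discriminant with d ≡ 2 (mod 3) or d ≡ 3 (mod 9), and let K be an imaginary quadratic field in which every prime dividing 3d splits (the Heegner hypothesis for 3d; in particular 3 splits in K). Let E_d be the elliptic curve over K defined by the Weierstrass equation y² = x³ − 432d. Then E_d(K)[3] = 0; that is, the only K-rational point P of E_d with 3·P = O is the point at infinity O. -/
/-!
A nonzero point `P = (x, y)` with `3 • P = 0` on `y² = x³ + b` satisfies `x(2P) = x(P)`, which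
forces `x = 0` or `x³ = -4b`; hence `b` or `-3b` is a square. For `b = -432d` this makes `-3d`
or `d` a square in `K`. Neither is: if a rational integer `n` is a square in `K`, then `(n)` is
the square of an ideal of `𝓞 K`, so its multiplicity at a prime `𝔭` is even; when `ℓ = 𝔭𝔮`
splits, that multiplicity is the exponent of `ℓ` in `n`. As `d` is a fundamental discriminant,
`d` and `-3d` have a prime factor `ℓ ∣ 3d` with odd exponent, except for `d = -4` and `d = 12`,
where the claim reduces to `-1` not being a square in `K`; this holds because `2` splits.
-/

open scoped NumberField

def SplitsIn (R : Type*) [CommRing R] (ℓ : ℕ) : Prop :=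
  ∃ P Q : Ideal R, P ≠ Q ∧ P.IsPrime ∧ Q.IsPrime ∧ Ideal.span {(ℓ : R)} = P * Q

theorem Ideal.intCast_notMem_of_natCast_mem {R : Type*} [CommRing R] {P : Ideal R}
    (hP : P ≠ ⊤) {ℓ : ℕ} (hℓ : ℓ.Prime) (hℓP : (ℓ : R) ∈ P) {u : ℤ}
    (hu : ¬ (ℓ : ℤ) ∣ u) : (u : R) ∉ P := by
  intro huP
  obtain ⟨a, b, hab⟩ := ((Nat.prime_iff_prime_int.mp hℓ).coprime_iff_not_dvd.mpr hu).map
    (Int.castRingHom R)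
  refine hP (P.eq_top_of_isUnit_mem ?_ isUnit_one)
  rw [← hab]
  simp only [eq_intCast, Int.cast_natCast]
  exact P.add_mem (P.mul_mem_left a hℓP) (P.mul_mem_left b huP)

theorem Ideal.mul_ne_bot_of_span_natCast_eq_mul {R : Type*} [CommRing R] [CharZero R]
    {ℓ : ℕ} (hℓ : ℓ ≠ 0) {P Q : Ideal R} (hspan : Ideal.span {(ℓ : R)} = P * Q) :
    P * Q ≠ ⊥ := by
  rw [← hspan, Ne, Ideal.span_singleton_eq_bot]
  exact_mod_cast hℓ

theorem IsIntegrallyClosed.isSquare_of_isSquare_algebraMap {R K : Type*} [CommRing R]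
    [IsDomain R] [IsIntegrallyClosed R] [Field K] [Algebra R K] [IsFractionRing R K] {r : R}
    (h : IsSquare (algebraMap R K r)) : IsSquare r := by
  obtain ⟨γ, hγ⟩ := h
  have hint : IsIntegral R γ :=
    ⟨.X ^ 2 - .C r, Polynomial.monic_X_pow_sub_C r two_ne_zero, by simp [← hγ, sq]⟩
  obtain ⟨g, rfl⟩ := IsIntegrallyClosed.isIntegral_iff.mp hint
  exact ⟨g, IsFractionRing.injective R K (by rw [hγ, map_mul])⟩

namespace IsDedekindDomain

variable {R : Type*} [CommRing R] [IsDedekindDomain R]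

theorem emultiplicity_mul_of_ne {P Q : Ideal R} [hP : P.IsPrime] [hQ : Q.IsPrime] (hPQ : P ≠ Q)
    (hP0 : P ≠ ⊥) (hQ0 : Q ≠ ⊥) : emultiplicity P (P * Q) = 1 := by
  have hPprime := Ideal.prime_of_isPrime hP0 hP
  rw [emultiplicity_mul hPprime, (FiniteMultiplicity.of_prime_left hPprime hP0).emultiplicity_self,
    emultiplicity_eq_zero.mpr, add_zero]
  exact fun hdvd ↦ hPQ ((hQ.isMaximal hQ0).eq_of_le hP.ne_top (Ideal.le_of_dvd hdvd)).symm

theorem not_isSquare_of_odd_multiplicity {P : Ideal R} [hP : P.IsPrime] (hP0 : P ≠ ⊥) {r : R}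
    (hr : r ≠ 0) (hodd : Odd (multiplicity P (Ideal.span {r}))) : ¬ IsSquare r := by
  rintro ⟨g, rfl⟩
  have hPprime := Ideal.prime_of_isPrime hP0 hP
  have hfin : FiniteMultiplicity P (Ideal.span {g}) :=
    .of_prime_left hPprime (by simpa using left_ne_zero_of_mul hr)
  rw [← Ideal.span_singleton_mul_span_singleton, ← sq, hfin.multiplicity_pow hPprime] at hodd
  exact Nat.not_odd_iff_even.mpr (even_two_mul _) hodd

variable [CharZero R]

theorem emultiplicity_span_intCast_of_split {ℓ : ℕ} (hℓ : ℓ.Prime) {P Q : Ideal R}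
    [hP : P.IsPrime] [Q.IsPrime] (hPQ : P ≠ Q) (hsplit : Ideal.span {(ℓ : R)} = P * Q) (n : ℤ) :
    emultiplicity P (Ideal.span {(n : R)}) = emultiplicity (ℓ : ℤ) n := by
  rcases eq_or_ne n 0 with rfl | hn
  · rw [Int.cast_zero, Ideal.span_singleton_eq_bot.mpr rfl, ← Ideal.zero_eq_bot,
      emultiplicity_zero, emultiplicity_zero]
  have hPQ0 := Ideal.mul_ne_bot_of_span_natCast_eq_mul hℓ.ne_zero hsplit
  have hP0 : P ≠ ⊥ := left_ne_zero_of_mul hPQ0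
  have hfin : FiniteMultiplicity (ℓ : ℤ) n :=
    Int.finiteMultiplicity_iff.mpr ⟨by rw [Int.natAbs_natCast]; exact hℓ.ne_one, hn⟩
  obtain ⟨u, hnu, hu⟩ := hfin.exists_eq_pow_mul_and_not_dvd
  have huP : (u : R) ∉ P := Ideal.intCast_notMem_of_natCast_mem hP.ne_top hℓ
    (Ideal.mul_le_left (hsplit ▸ Ideal.mem_span_singleton_self _)) hu
  have hspan :
      Ideal.span {(n : R)} = (P * Q) ^ multiplicity (ℓ : ℤ) n * Ideal.span {(u : R)} := by
    rw [← hsplit, Ideal.span_singleton_pow, Ideal.span_singleton_mul_span_singleton,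
      ← Int.cast_natCast, ← Int.cast_pow, ← Int.cast_mul, ← hnu]
  have hPprime := Ideal.prime_of_isPrime hP0 hP
  rw [hspan, emultiplicity_mul hPprime, emultiplicity_pow hPprime,
    emultiplicity_mul_of_ne hPQ hP0 (right_ne_zero_of_mul hPQ0),
    emultiplicity_eq_zero.mpr (by rwa [Ideal.dvd_span_singleton]),
    hfin.emultiplicity_eq_multiplicity]
  simp

variable (K : Type*) [Field K] [Algebra R K] [IsFractionRing R K]

theorem not_isSquare_intCast_of_splitsIn {ℓ : ℕ} (hℓ : ℓ.Prime) (hsplit : SplitsIn R ℓ)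
    {n : ℤ} (hn : n ≠ 0) (hodd : Odd (multiplicity (ℓ : ℤ) n)) : ¬ IsSquare (n : K) := by
  obtain ⟨P, Q, hPQ, hP, hQ, hspan⟩ := hsplit
  refine fun h ↦ not_isSquare_of_odd_multiplicity
    (left_ne_zero_of_mul (Ideal.mul_ne_bot_of_span_natCast_eq_mul hℓ.ne_zero hspan))
    (Int.cast_ne_zero.mpr hn) ?_
    (IsIntegrallyClosed.isSquare_of_isSquare_algebraMap (K := K) (by simpa using h))
  rwa [multiplicity, emultiplicity_span_intCast_of_split hℓ hPQ hspan]

theorem not_isSquare_neg_one_of_splitsIn_two (hsplit : SplitsIn R 2) : ¬ IsSquare (-1 : K) := by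
  obtain ⟨P, Q, hPQ, hP, hQ, hspan⟩ := hsplit
  have hPQ0 := Ideal.mul_ne_bot_of_span_natCast_eq_mul two_ne_zero hspan
  intro h
  obtain ⟨g, hg⟩ : IsSquare (-1 : R) :=
    IsIntegrallyClosed.isSquare_of_isSquare_algebraMap (K := K) (by simpa using h)
  have hg_unit : IsUnit g := .of_mul_eq_one (-g) (by linear_combination hg)
  -- `(1 + g)² = 2g` and `2g` generates `(2) = P * Q`, in which `P` occurs once.
  refine not_isSquare_of_odd_multiplicity (left_ne_zero_of_mul hPQ0) (r := 2 * g)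
    (mul_ne_zero two_ne_zero hg_unit.ne_zero) ?_ ⟨1 + g, by linear_combination hg⟩
  rw [Ideal.span_singleton_mul_right_unit hg_unit, ← Nat.cast_ofNat, hspan,
    multiplicity_eq_of_emultiplicity_eq_some (emultiplicity_mul_of_ne hPQ
      (left_ne_zero_of_mul hPQ0) (right_ne_zero_of_mul hPQ0))]
  exact odd_one

end IsDedekindDomain

open WeierstrassCurve.Affine in
theorem eq_zero_or_isSquare_of_three_nsmul_eq_zero {F : Type*} [Field F] [DecidableEq F]
    (h3 : (3 : F) ≠ 0) {b : F} {P : (WeierstrassCurve.mk 0 0 0 0 b).toAffine.Point}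
    (hP : 3 • P = 0) :
    P = 0 ∨ IsSquare b ∨ IsSquare (-3 * b) := by
  rcases P with _ | @⟨x, y, h⟩
  · exact .inl rfl
  have hxy : y ^ 2 = x ^ 3 + b := by simpa using (equation_iff x y).mp h.1
  rw [succ_nsmul, two_nsmul] at hP
  by_cases hy : y = (WeierstrassCurve.mk 0 0 0 0 b).toAffine.negY x y
  · rw [Point.add_self_of_Y_eq hy, zero_add] at hP
    exact .inl hP
  have h2y : 2 * y ≠ 0 := fun h2y ↦ hy (by simp only [negY]; linear_combination h2y)
  rw [Point.add_self_of_Y_ne hy, ← eq_neg_iff_add_eq_zero, Point.neg_some, Point.some.injEq] at hP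
  have hx := hP.1
  rw [addX, slope_of_Y_ne rfl hy] at hx
  simp only [negY, mul_zero, zero_mul, add_zero, sub_zero, sub_neg_eq_add, ← two_mul] at hx
  field_simp [left_ne_zero_of_mul h2y, right_ne_zero_of_mul h2y] at hx
  have hcubic : x * (x ^ 3 + 4 * b) = 0 := by
    refine (mul_eq_zero.mp ?_).resolve_left h3
    linear_combination -hx - 12 * x * hxy
  rcases mul_eq_zero.mp hcubic with hx0 | hx3
  · exact .inr (.inl ⟨y, by linear_combination -hxy - x ^ 2 * hx0⟩)
  · exact .inr (.inr ⟨y, by linear_combination -hxy - hx3⟩)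

theorem isSquare_of_isSquare_sq_mul {F : Type*} [Field F] {c x : F} (hc : c ≠ 0)
    (h : IsSquare (c ^ 2 * x)) : IsSquare x := by
  simpa [hc] using h.div (IsSquare.sq c)

theorem Int.exists_prime_odd_multiplicity_sq_mul {a m : ℤ} (ha : a ≠ 0) (hm : Squarefree m)
    (hm1 : m.natAbs ≠ 1) :
    ∃ ℓ : ℕ, ℓ.Prime ∧ (ℓ : ℤ) ∣ m ∧ Odd (multiplicity (ℓ : ℤ) (a ^ 2 * m)) := by
  obtain ⟨p, hp, hpm⟩ := Int.exists_prime_and_dvd hm1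
  have hp_nat : p.natAbs.Prime := Int.prime_iff_natAbs_prime.mp hp
  have hp_int : Prime (p.natAbs : ℤ) := Nat.prime_iff_prime_int.mp hp_nat
  have hfin {n : ℤ} (hn : n ≠ 0) : FiniteMultiplicity (p.natAbs : ℤ) n :=
    Int.finiteMultiplicity_iff.mpr ⟨by rw [Int.natAbs_natCast]; exact hp_nat.ne_one, hn⟩
  have hm_mult : multiplicity (p.natAbs : ℤ) m = 1 := by
    rw [(hfin hm.ne_zero).multiplicity_eq_iff]
    exact ⟨by simpa using hpm, fun h ↦ hp_int.not_isUnit (hm _ (by simpa [sq] using h))⟩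
  refine ⟨p.natAbs, hp_nat, Int.natAbs_dvd.mpr hpm, ?_⟩
  rw [multiplicity_mul hp_int (hfin (mul_ne_zero (pow_ne_zero 2 ha) hm.ne_zero)),
    (hfin ha).multiplicity_pow hp_int, hm_mult]
  exact odd_two_mul_add_one _

def IsFundamentalDiscriminant (d : ℤ) : Prop :=
  (d % 4 = 1 ∧ Squarefree d) ∨
    (∃ m : ℤ, d = 4 * m ∧ Squarefree m ∧ (m % 4 = 2 ∨ m % 4 = 3))

namespace IsFundamentalDiscriminant

variable {d : ℤ} (hd : IsFundamentalDiscriminant d)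
include hd

theorem exists_prime_odd_multiplicity (hd1 : d ≠ 1) :
    d = -4 ∨ ∃ ℓ : ℕ, ℓ.Prime ∧ (ℓ : ℤ) ∣ d ∧ Odd (multiplicity (ℓ : ℤ) d) := by
  rcases hd with ⟨hd4, hsf⟩ | ⟨m, rfl, hsf, hm4⟩
  · obtain ⟨ℓ, hℓ, hℓd, hodd⟩ :=
      Int.exists_prime_odd_multiplicity_sq_mul one_ne_zero hsf (by omega)
    exact .inr ⟨ℓ, hℓ, hℓd, by simpa using hodd⟩
  · rcases eq_or_ne m (-1) with rfl | hm1
    · exact .inl rfl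
    obtain ⟨ℓ, hℓ, hℓm, hodd⟩ :=
      Int.exists_prime_odd_multiplicity_sq_mul (a := 2) two_ne_zero hsf (by omega)
    exact .inr ⟨ℓ, hℓ, hℓm.mul_left 4, by norm_num at hodd; exact hodd⟩

theorem exists_prime_odd_multiplicity_neg_three_mul (hcong : d % 3 = 2 ∨ d % 9 = 3) :
    d = 12 ∨ ∃ ℓ : ℕ, ℓ.Prime ∧ (ℓ : ℤ) ∣ 3 * d ∧ Odd (multiplicity (ℓ : ℤ) (-3 * d)) := by
  rcases hcong with hd3 | hd9
  · refine .inr ⟨3, Nat.prime_three, dvd_mul_right 3 d, ?_⟩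
    have hfin : FiniteMultiplicity (3 : ℤ) (-3 * d) :=
      Int.finiteMultiplicity_iff.mpr ⟨by norm_num, by omega⟩
    rw [Nat.cast_ofNat,
      (hfin.multiplicity_eq_iff (n := 1)).mpr ⟨by norm_num, by norm_num; omega⟩]
    exact odd_one
  obtain ⟨e, rfl⟩ : (3 : ℤ) ∣ d := by omega
  rcases hd with ⟨hd4, hsf⟩ | ⟨m, hm, hsf, -⟩
  · obtain ⟨ℓ, hℓ, hℓe, hodd⟩ :=
      Int.exists_prime_odd_multiplicity_sq_mul three_ne_zero hsf.of_mul_right (by omega)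
    refine .inr ⟨ℓ, hℓ, (hℓe.mul_left 3).mul_left 3, ?_⟩
    rwa [show -3 * (3 * e) = -(3 ^ 2 * e) by ring, multiplicity_neg]
  · obtain ⟨f, rfl⟩ : (3 : ℤ) ∣ m := by omega
    rcases eq_or_ne f 1 with rfl | hf1
    · exact .inl (by omega)
    obtain ⟨ℓ, hℓ, hℓf, hodd⟩ :=
      Int.exists_prime_odd_multiplicity_sq_mul (a := 6) (by norm_num) hsf.of_mul_right (by omega)
    have he : e = 4 * f := by omega
    subst he
    refine .inr ⟨ℓ, hℓ, by rw [show 3 * (3 * (4 * f)) = 36 * f by ring]; exact hℓf.mul_left 36, ?_⟩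
    rwa [show -3 * (3 * (4 * f)) = -(6 ^ 2 * f) by ring, multiplicity_neg]

end IsFundamentalDiscriminant

open scoped Classical in
theorem Ed_three_torsion_trivial_over_heegner_field_general
    (d : ℤ)
    (hfund : (d % 4 = 1 ∧ Squarefree d) ∨
      (∃ m : ℤ, d = 4 * m ∧ Squarefree m ∧ (m % 4 = 2 ∨ m % 4 = 3)))
    (hcong : d % 3 = 2 ∨ d % 9 = 3)
    (K : Type) [Field K] [NumberField K]
    (hheegner : ∀ ℓ : ℕ, ℓ.Prime → (ℓ : ℤ) ∣ 3 * d →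
      ∃ P Q : Ideal (𝓞 K), P ≠ Q ∧ P.IsPrime ∧ Q.IsPrime ∧
        Ideal.span {(ℓ : 𝓞 K)} = P * Q)
    (Ed : WeierstrassCurve K)
    (hEd : Ed = { a₁ := 0, a₂ := 0, a₃ := 0, a₄ := 0, a₆ := -432 * (d : K) }) :
    ∀ P : Ed.toAffine.Point, 3 • P = 0 → P = 0 := by
  have hd : ¬ IsSquare (d : K) := by
    rcases IsFundamentalDiscriminant.exists_prime_odd_multiplicity hfund (by omega) with
      rfl | ⟨ℓ, hℓ, hℓd, hodd⟩
    · refine fun h ↦ IsDedekindDomain.not_isSquare_neg_one_of_splitsIn_two K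
        (hheegner 2 Nat.prime_two (by norm_num))
        (isSquare_of_isSquare_sq_mul (c := 2) two_ne_zero ?_)
      convert h using 1
      push_cast
      ring
    · exact IsDedekindDomain.not_isSquare_intCast_of_splitsIn K hℓ (hheegner ℓ hℓ (hℓd.mul_left 3))
        (by omega) hodd
  have h3d : ¬ IsSquare (-3 * d : K) := by
    rcases IsFundamentalDiscriminant.exists_prime_odd_multiplicity_neg_three_mul hfund hcong with
      rfl | ⟨ℓ, hℓ, hℓd, hodd⟩
    · refine fun h ↦ IsDedekindDomain.not_isSquare_neg_one_of_splitsIn_two K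
        (hheegner 2 Nat.prime_two (by norm_num))
        (isSquare_of_isSquare_sq_mul (c := 6) (by norm_num) ?_)
      convert h using 1
      push_cast
      ring
    · exact_mod_cast IsDedekindDomain.not_isSquare_intCast_of_splitsIn K hℓ (hheegner ℓ hℓ hℓd)
        (by omega) hodd
  subst hEd
  intro P hP
  rcases eq_zero_or_isSquare_of_three_nsmul_eq_zero three_ne_zero hP with hP0 | hsq | hsq
  · exact hP0
  · refine absurd (isSquare_of_isSquare_sq_mul (c := 12) (by norm_num) ?_) h3d
    convert hsq using 1
    ring
  · refine absurd (isSquare_of_isSquare_sq_mul (c := 36) (by norm_num) ?_) hd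
    convert hsq using 1
    ring

open scoped Classical in
/-- **Lemma 5.4 of Kriz–Li.** Let `d` be a fundamental discriminant with `d ≡ 2 (mod 3)`
or `d ≡ 3 (mod 9)`, and let `K` be an imaginary quadratic field in which every prime
dividing `3d` splits (the Heegner hypothesis for `3d`). Then the elliptic curve
`E_d : y² = x³ − 432d` over `K` has trivial 3-torsion: `E_d(K)[3] = 0`. -/
theorem Ed_three_torsion_trivial_over_heegner_field
    (d : ℤ)
    (hfund : (d % 4 = 1 ∧ Squarefree d) ∨
      (∃ m : ℤ, d = 4 * m ∧ Squarefree m ∧ (m % 4 = 2 ∨ m % 4 = 3)))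
    (hcong : d % 3 = 2 ∨ d % 9 = 3)
    (K : Type) [Field K] [NumberField K]
    (hquadratic : Module.finrank ℚ K = 2)
    (himaginary : IsEmpty (K →+* ℝ))
    (hheegner : ∀ ℓ : ℕ, ℓ.Prime → (ℓ : ℤ) ∣ 3 * d →
      ∃ P Q : Ideal (𝓞 K), P ≠ Q ∧ P.IsPrime ∧ Q.IsPrime ∧
        Ideal.span {(ℓ : 𝓞 K)} = P * Q)
    (Ed : WeierstrassCurve K)
    (hEd : Ed = { a₁ := 0, a₂ := 0, a₃ := 0, a₄ := 0, a₆ := -432 * (d : K) }) :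
    ∀ P : Ed.toAffine.Point, 3 • P = 0 → P = 0 :=
  Ed_three_torsion_trivial_over_heegner_field_general d hfund hcong K hheegner Ed hEd
end

section
/- Let F be a field of characteristic different from 2 and 3, and let d ∈ F be nonzero. Assume that neither d nor −3d is a square in F. Then the elliptic curve E_d over F defined by the Weierstrass equation y² = x³ − 432d has no F-rational point of order 3; that is, every point P ∈ E_d(F) with 3·P = O satisfies P = O. -/
/-!
If `P = (x, y)` has order 3 then `2P = -P`, so `P` is not 2-torsion (`y ≠ -y`) and `2P` has the
same `x`-coordinate as `P`. On `y² = x³ + b` the tangent slope is `ℓ = 3x²/2y` and `x(2P) = ℓ² - 2x`,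
so `ℓ² = 3x`; squaring `2yℓ = 3x²` and substituting `y² = x³ + b` gives `3x(x³ + 4b) = 0`.
For `b = -432d`, `x = 0` yields `y² = 12² · (-3d)` and `x³ = 1728d` yields `y² = 36² · d`.
-/

namespace WeierstrassCurve.Affine.Point

variable {F : Type*} [Field F] [DecidableEq F] {W : WeierstrassCurve.Affine F} {x y : F}

lemma add_self_eq_neg_of_three_smul_eq_zero {P : W.Point} (hP : 3 • P = 0) : P + P = -P :=
  eq_neg_of_add_eq_zero_left (by rwa [← two_nsmul, ← succ_nsmul])

lemma Y_ne_negY_of_three_smul_eq_zero {h : W.Nonsingular x y} (hP : 3 • some x y h = 0) :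
    y ≠ W.negY x y := by
  intro hy
  have h2P := add_self_eq_neg_of_three_smul_eq_zero hP
  rw [add_self_of_Y_eq hy, eq_comm, neg_eq_zero] at h2P
  exact some_ne_zero h h2P

lemma addX_slope_of_three_smul_eq_zero {h : W.Nonsingular x y} (hP : 3 • some x y h = 0) :
    W.addX x x (W.slope x x y y) = x := by
  have h2P := add_self_eq_neg_of_three_smul_eq_zero hP
  rw [add_self_of_Y_ne (Y_ne_negY_of_three_smul_eq_zero hP), neg_some, some.injEq] at h2P
  exact h2P.1

end WeierstrassCurve.Affine.Point

open WeierstrassCurve.Affine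

def mordellCurve {R : Type*} [CommRing R] (b : R) : WeierstrassCurve R :=
  { a₁ := 0, a₂ := 0, a₃ := 0, a₄ := 0, a₆ := b }

lemma mordellCurve_equation_iff {R : Type*} [CommRing R] {b x y : R} :
    (mordellCurve b).toAffine.Equation x y ↔ y ^ 2 = x ^ 3 + b := by
  simp [equation_iff, mordellCurve]

lemma mordellCurve_X_of_three_smul_eq_zero {F : Type*} [Field F] [DecidableEq F]
    (h3 : (3 : F) ≠ 0) {b x y : F} {h : (mordellCurve b).toAffine.Nonsingular x y}
    (hP : 3 • Point.some x y h = 0) : x = 0 ∨ x ^ 3 = -4 * b := by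
  have hcurve := mordellCurve_equation_iff.mp h.1
  have hy := Point.Y_ne_negY_of_three_smul_eq_zero hP
  have hx2P := Point.addX_slope_of_three_smul_eq_zero hP
  have hslope := slope_of_Y_ne rfl hy
  set ℓ := (mordellCurve b).toAffine.slope x x y y
  simp only [addX, negY, mordellCurve, mul_zero, zero_mul, add_zero, sub_zero] at hx2P hslope hy
  have htangent : ℓ * (y - -y) = 3 * x ^ 2 := by
    rw [hslope, div_mul_cancel₀ _ (sub_ne_zero.mpr hy)]
  have hcubic : 3 * x * (x ^ 3 + 4 * b) = 0 := by
    linear_combination (ℓ * (y - -y) + 3 * x ^ 2) * htangent - 4 * y ^ 2 * hx2P - 12 * x * hcurve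
  rcases mul_eq_zero.mp hcubic with hx | hx
  · exact .inl ((mul_eq_zero.mp hx).resolve_left h3)
  · exact .inr (by linear_combination hx)

lemma isSquare_of_sq_eq_mul_sq {F : Type*} [Field F] {a c y : F} (hc : c ≠ 0)
    (h : y ^ 2 = a * c ^ 2) : IsSquare a := by
  rw [eq_div_of_mul_eq (pow_ne_zero 2 hc) h.symm]
  exact (IsSquare.sq y).div (IsSquare.sq c)

open Classical in
theorem Ed_no_three_torsion_of_not_square_general
    (F : Type) [Field F] (hchar2 : (2 : F) ≠ 0) (hchar3 : (3 : F) ≠ 0)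
    (d : F)
    (hsq : ¬ IsSquare d) (hsq' : ¬ IsSquare (-3 * d))
    (Ed : WeierstrassCurve F)
    (hEd : Ed = { a₁ := 0, a₂ := 0, a₃ := 0, a₄ := 0, a₆ := -432 * d }) :
    ∀ P : Ed.toAffine.Point, 3 • P = 0 → P = 0 := by
  subst hEd
  rintro (_ | ⟨x, y, h⟩) hP
  · rfl
  have hcurve : y ^ 2 = x ^ 3 + -432 * d := mordellCurve_equation_iff.mp h.1
  have h6 : (2 * 3 : F) ≠ 0 := mul_ne_zero hchar2 hchar3
  exfalso
  rcases mordellCurve_X_of_three_smul_eq_zero (b := -432 * d) hchar3 hP with rfl | hx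
  · exact hsq' <| isSquare_of_sq_eq_mul_sq (y := y) (c := 2 * (2 * 3)) (mul_ne_zero hchar2 h6)
      (by linear_combination hcurve)
  · exact hsq <| isSquare_of_sq_eq_mul_sq (y := y) (c := (2 * 3) ^ 2) (pow_ne_zero 2 h6)
      (by linear_combination hcurve + hx)

open Classical in
/-- **Field-theoretic content of Lemmas 5.4–5.5 of Kriz–Li.** Let `F` be a field of
characteristic different from `2` and `3`, and let `d ∈ F` be nonzero such that neither
`d` nor `−3d` is a square in `F`. Then the elliptic curve `E_d : y² = x³ − 432d` over
`F` has no `F`-rational point of order 3: every `P ∈ E_d(F)` with `3·P = O` is `O`. -/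
theorem Ed_no_three_torsion_of_not_square
    (F : Type) [Field F] (hchar2 : (2 : F) ≠ 0) (hchar3 : (3 : F) ≠ 0)
    (d : F) (hd : d ≠ 0)
    (hsq : ¬ IsSquare d) (hsq' : ¬ IsSquare (-3 * d))
    (Ed : WeierstrassCurve F)
    (hEd : Ed = { a₁ := 0, a₂ := 0, a₃ := 0, a₄ := 0, a₆ := -432 * d }) :
    ∀ P : Ed.toAffine.Point, 3 • P = 0 → P = 0 :=
  Ed_no_three_torsion_of_not_square_general F hchar2 hchar3 d hsq hsq' Ed hEd
end
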